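/- arXiv:1403.5282 — 4 statements merged into one kernel-verified Lean document; each statement's English description precedes it below -/
import Mathlib

section
/- Let B be a non-degenerate idempotent algebra and ω a faithful linear functional on B (i.e. ω(dB) ≠ 0 and ω(Bd) ≠ 0 whenever d ≠ 0). If B·ω = ω·B as subsets of the dual space (where (b·ω)(c) = ω(cb) and (ω·b)(c) = ω(bc)), then there exists a unique algebra automorphism σ of B such that ω(ab) = ω(b σ(a)) for all a, b ∈ B, and σ is characterized by σ(b)·ω = ω·b for all b ∈ B. -/
/-!
Faithfulness of `ω` makes `b ↦ b·ω` and `b ↦ ω·b` injective linear maps `B → B*`, and the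
hypothesis `B·ω = ω·B` says they have the same range. Hence `σ a` can be defined as the unique
element with `σ(a)·ω = ω·a`, and `σ` is a linear bijection. Multiplicativity and uniqueness both
follow from injectivity of `b ↦ b·ω`.
-/

namespace ModularAutomorphism

variable {k B : Type*} [CommRing k] [NonUnitalRing B] [Module k B]
  [SMulCommClass k B B] [IsScalarTower k B B]

/-- `leftMulDual ω b` is the paper's `b·ω = ω(· b)`. -/
def leftMulDual (ω : B →ₗ[k] k) : B →ₗ[k] Module.Dual k B := (LinearMap.mul k B).flip.compr₂ ω

/-- `rightMulDual ω b` is the paper's `ω·b = ω(b ·)`. -/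
def rightMulDual (ω : B →ₗ[k] k) : B →ₗ[k] Module.Dual k B := (LinearMap.mul k B).compr₂ ω

lemma leftMulDual_injective {ω : B →ₗ[k] k} (hfaith : ∀ d : B, d ≠ 0 → ∃ b, ω (b * d) ≠ 0) :
    Function.Injective (leftMulDual ω) := by
  refine (injective_iff_map_eq_zero _).mpr fun d hd => ?_
  by_contra hne
  obtain ⟨b, hb⟩ := hfaith d hne
  exact hb (LinearMap.congr_fun hd b)

lemma rightMulDual_injective {ω : B →ₗ[k] k} (hfaith : ∀ d : B, d ≠ 0 → ∃ b, ω (d * b) ≠ 0) :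
    Function.Injective (rightMulDual ω) := by
  refine (injective_iff_map_eq_zero _).mpr fun d hd => ?_
  by_contra hne
  obtain ⟨b, hb⟩ := hfaith d hne
  exact hb (LinearMap.congr_fun hd b)

lemma range_leftMulDual_eq_range_rightMulDual {ω : B →ₗ[k] k}
    (h : {f : B →ₗ[k] k | ∃ b : B, f = ω ∘ₗ LinearMap.mulRight k b}
      = {f : B →ₗ[k] k | ∃ b : B, f = ω ∘ₗ LinearMap.mulLeft k b}) :
    LinearMap.range (leftMulDual ω) = LinearMap.range (rightMulDual ω) := by
  ext f
  simp only [LinearMap.mem_range]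
  exact (exists_congr fun _ => eq_comm).trans
    ((Set.ext_iff.mp h f).trans (exists_congr fun _ => eq_comm))

/-- The map `a ↦ σ a` determined by `σ(a)·ω = ω·a`. -/
noncomputable def modularEquiv (ω : B →ₗ[k] k) (hl : Function.Injective (leftMulDual ω))
    (hr : Function.Injective (rightMulDual ω))
    (hrange : LinearMap.range (leftMulDual ω) = LinearMap.range (rightMulDual ω)) :
    B ≃ₗ[k] B :=
  (LinearEquiv.ofInjective _ hr).trans
    ((LinearEquiv.ofEq _ _ hrange.symm).trans (LinearEquiv.ofInjective _ hl).symm)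

lemma leftMulDual_modularEquiv (ω : B →ₗ[k] k) (hl : Function.Injective (leftMulDual ω))
    (hr : Function.Injective (rightMulDual ω))
    (hrange : LinearMap.range (leftMulDual ω) = LinearMap.range (rightMulDual ω)) (a : B) :
    leftMulDual ω (modularEquiv ω hl hr hrange a) = rightMulDual ω a := by
  rw [← LinearEquiv.ofInjective_apply (h := hl), modularEquiv]
  simp only [LinearEquiv.trans_apply, LinearEquiv.apply_symm_apply, LinearEquiv.coe_ofEq_apply,
    LinearEquiv.ofInjective_apply]

lemma map_mul_of_apply_mul_eq {ω : B →ₗ[k] k} (hl : Function.Injective (leftMulDual ω))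
    {σ : B → B} (hσ : ∀ a c, ω (c * σ a) = ω (a * c)) (a b : B) :
    σ (a * b) = σ a * σ b := by
  refine hl (LinearMap.ext fun x => ?_)
  calc ω (x * σ (a * b)) = ω (a * (b * x)) := by rw [hσ, mul_assoc]
    _ = ω (b * (x * σ a)) := by rw [← hσ, mul_assoc]
    _ = ω (x * (σ a * σ b)) := by rw [← hσ, mul_assoc]

lemma eq_of_apply_mul_eq {ω : B →ₗ[k] k} (hl : Function.Injective (leftMulDual ω))
    {σ τ : B → B} (hσ : ∀ a c, ω (c * σ a) = ω (a * c)) (hτ : ∀ a c, ω (c * τ a) = ω (a * c)) :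
    σ = τ :=
  funext fun a => hl (LinearMap.ext fun c => (hσ a c).trans (hτ a c).symm)

end ModularAutomorphism

open ModularAutomorphism in
theorem stmt_0_general (k : Type*) [Field k] (B : Type*) [NonUnitalRing B] [Module k B]
    [SMulCommClass k B B] [IsScalarTower k B B]
    (ω : B →ₗ[k] k)
    (hfaithl : ∀ d : B, d ≠ 0 → ∃ b, ω (d * b) ≠ 0)
    (hfaithr : ∀ d : B, d ≠ 0 → ∃ b, ω (b * d) ≠ 0)
    (hBω : {f : B →ₗ[k] k | ∃ b : B, f = ω ∘ₗ LinearMap.mulRight k b}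
         = {f : B →ₗ[k] k | ∃ b : B, f = ω ∘ₗ LinearMap.mulLeft k b}) :
    ∃! σ : B ≃ₗ[k] B, (∀ a b : B, σ (a * b) = σ a * σ b)
      ∧ (∀ a b : B, ω (a * b) = ω (b * σ a))
      ∧ (∀ a c : B, ω (c * σ a) = ω (a * c)) := by
  have hl := leftMulDual_injective hfaithr
  have hr := rightMulDual_injective hfaithl
  set σ := modularEquiv ω hl hr (range_leftMulDual_eq_range_rightMulDual hBω)
  have hσ : ∀ a c, ω (c * σ a) = ω (a * c) := fun a c =>
    LinearMap.congr_fun (leftMulDual_modularEquiv ω hl hr _ a) c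
  refine ⟨σ, ⟨map_mul_of_apply_mul_eq hl hσ, fun a b => (hσ a b).symm, hσ⟩, ?_⟩
  rintro τ ⟨-, -, hτ⟩
  exact LinearEquiv.coe_injective (eq_of_apply_mul_eq hl hτ hσ)

/-- A faithful functional on a non-degenerate idempotent algebra with `B·ω = ω·B`
admits a unique modular automorphism. -/
theorem stmt_0 (k : Type*) [Field k] (B : Type*) [NonUnitalRing B] [Module k B]
    [SMulCommClass k B B] [IsScalarTower k B B]
    (hndl : ∀ a : B, (∀ b : B, a * b = 0) → a = 0)
    (hndr : ∀ a : B, (∀ b : B, b * a = 0) → a = 0)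
    (hidem : ∀ a : B, a ∈ Submodule.span k {x : B | ∃ b c : B, x = b * c})
    (ω : B →ₗ[k] k)
    (hfaithl : ∀ d : B, d ≠ 0 → ∃ b, ω (d * b) ≠ 0)
    (hfaithr : ∀ d : B, d ≠ 0 → ∃ b, ω (b * d) ≠ 0)
    (hBω : {f : B →ₗ[k] k | ∃ b : B, f = ω ∘ₗ LinearMap.mulRight k b}
         = {f : B →ₗ[k] k | ∃ b : B, f = ω ∘ₗ LinearMap.mulLeft k b}) :
    ∃! σ : B ≃ₗ[k] B, (∀ a b : B, σ (a * b) = σ a * σ b)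
      ∧ (∀ a b : B, ω (a * b) = ω (b * σ a))
      ∧ (∀ a c : B, ω (c * σ a) = ω (a * c)) :=
  stmt_0_general k B ω hfaithl hfaithr hBω
end

section
/- Let H be a Hopf algebra with antipode S and let φ be a left integral in the sense that (id ⊗ φ)(Δ(a)) = φ(a)·1 for all a ∈ H. Then the strong left invariance identity Σ S(a₍₁₎) φ(a₍₂₎ b) = Σ b₍₁₎ φ(a b₍₂₎) holds for all a, b ∈ H. -/
open TensorProduct

/-
Σ b₍₁₎ φ(a b₍₂₎) is the image of (1 ⊗ a) Δ(b) under x ⊗ y ↦ φ(y) x, and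
1 ⊗ a = Σ S(a₍₁₎) a₍₂₎ ⊗ a₍₃₎. Since Δ is multiplicative, this turns the right side into
Σ S(a₍₁₎) · (id ⊗ φ)(Δ(a₍₂₎ b)), and left invariance of φ collapses the inner term to φ(a₍₂₎ b).
-/

open LinearMap Coalgebra HopfAlgebra

section TensorFunctional

variable {k A : Type*} [CommSemiring k] [Semiring A] [Algebra k A]

lemma TensorProduct.rid_lTensor_tmul_one_mul (f : A →ₗ[k] k) (u : A) (t : A ⊗[k] A) :
    TensorProduct.rid k A (f.lTensor A ((u ⊗ₜ 1) * t))
      = u * TensorProduct.rid k A (f.lTensor A t) := by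
  induction t using TensorProduct.induction_on with
  | zero => simp
  | tmul x y => simp [Algebra.TensorProduct.tmul_mul_tmul]
  | add s t hs ht => simp only [mul_add, map_add, hs, ht]

lemma mul'_lTensor_comp_mulLeft (f : A →ₗ[k] k) (a : A) (t : A ⊗[k] A) :
    mul' k A ((Algebra.linearMap k A ∘ₗ f ∘ₗ mulLeft k a).lTensor A t)
      = TensorProduct.rid k A (f.lTensor A ((1 ⊗ₜ a) * t)) := by
  induction t using TensorProduct.induction_on with
  | zero => simp
  | tmul x y => simp [Algebra.TensorProduct.tmul_mul_tmul, Algebra.smul_def, Algebra.commutes]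
  | add s t hs ht => simp only [map_add, mul_add, hs, ht]

end TensorFunctional

namespace HopfAlgebra

variable {k H : Type*} [CommSemiring k] [Semiring H] [HopfAlgebra k H]

variable (k H) in
noncomputable def antipodeMulComul : H ⊗[k] H →ₗ[k] H ⊗[k] H :=
  (mul' k H ∘ₗ (antipode k).rTensor H).rTensor H ∘ₗ (TensorProduct.assoc k H H H).symm.toLinearMap
    ∘ₗ (comul (R := k)).lTensor H

lemma antipodeMulComul_tmul (x y : H) :
    antipodeMulComul k H (x ⊗ₜ y) = (antipode k x ⊗ₜ 1) * comul y := by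
  simp only [antipodeMulComul, coe_comp, Function.comp_apply, lTensor_tmul]
  induction comul (R := k) y using TensorProduct.induction_on with
  | zero => simp
  | tmul y₁ y₂ => simp [Algebra.TensorProduct.tmul_mul_tmul]
  | add s t hs ht => simp only [tmul_add, map_add, hs, ht, mul_add]

lemma antipodeMulComul_comul (a : H) : antipodeMulComul k H (comul a) = 1 ⊗ₜ a := by
  simp only [antipodeMulComul, coe_comp, Function.comp_apply, LinearEquiv.coe_coe,
    coassoc_symm_apply, ← rTensor_comp_apply, comp_assoc, mul_antipode_rTensor_comul]
  rw [rTensor_comp_apply, rTensor_counit_comul]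
  simp

end HopfAlgebra

section LeftIntegral

variable {k H : Type*} [CommSemiring k] [Semiring H] [HopfAlgebra k H]

variable (k) in
def IsLeftIntegral (φ : H →ₗ[k] k) : Prop :=
  ∀ a : H, TensorProduct.rid k H (φ.lTensor H (comul a)) = φ a • (1 : H)

lemma IsLeftIntegral.mul'_map_antipode_mulRight {φ : H →ₗ[k] k} (hφ : IsLeftIntegral k φ) (b : H)
    (t : H ⊗[k] H) :
    mul' k H (map (antipode k) (Algebra.linearMap k H ∘ₗ φ ∘ₗ mulRight k b) t)
      = TensorProduct.rid k H (φ.lTensor H (antipodeMulComul k H t * comul b)) := by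
  induction t using TensorProduct.induction_on with
  | zero => simp
  | tmul x y =>
    rw [antipodeMulComul_tmul, mul_assoc, ← Bialgebra.comul_mul,
      TensorProduct.rid_lTensor_tmul_one_mul, hφ]
    simp [Algebra.smul_def]
  | add s t hs ht => simp only [map_add, add_mul, hs, ht]
end LeftIntegral

/-- Strong left invariance for a left integral `φ` on a Hopf algebra:
`Σ S(a₍₁₎) φ(a₍₂₎ b) = Σ b₍₁₎ φ(a b₍₂₎)`. -/
theorem stmt_5 (k H : Type*) [CommRing k] [Ring H] [HopfAlgebra k H]
    (φ : H →ₗ[k] k)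
    (hφ : ∀ a : H,
      (TensorProduct.rid k H) (LinearMap.lTensor H φ (Coalgebra.comul a)) = φ a • (1 : H)) :
    ∀ a b : H,
      (LinearMap.mul' k H)
        ((TensorProduct.map (HopfAlgebra.antipode (R := k))
            ((Algebra.linearMap k H) ∘ₗ φ ∘ₗ LinearMap.mulRight k b))
          (Coalgebra.comul a))
      = (LinearMap.mul' k H)
        ((TensorProduct.map LinearMap.id
            ((Algebra.linearMap k H) ∘ₗ φ ∘ₗ LinearMap.mulLeft k a))
          (Coalgebra.comul b)) := by
  intro a b
  rw [IsLeftIntegral.mul'_map_antipode_mulRight hφ, antipodeMulComul_comul]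
  exact (mul'_lTensor_comp_mulLeft φ a _).symm
end

section
/- Let H be a Hopf algebra with antipode S and let ψ be a right integral, i.e. (ψ ⊗ id)(Δ(a)) = ψ(a)·1 for all a ∈ H. Then the strong right invariance identity Σ ψ(b a₍₁₎) S(a₍₂₎) = Σ ψ(b₍₁₎ a) b₍₂₎ holds for all a, b ∈ H. -/
/-!
Put `P_b(x) = Σ ψ(b₁ x) b₂`. Right invariance of `ψ` applied to `b x` says that the convolution
`P_b * id` is `x ↦ ψ(b x) 1`. Convolving on the right with the antipode and using `id * S = 1`
gives `(x ↦ ψ(b x) 1) * S = P_b`, and evaluating at `a` is the claimed identity.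
-/

open TensorProduct Coalgebra WithConv LinearMap

namespace HopfAlgebra

variable {R A : Type*} [CommSemiring R] [Semiring A]

section Algebra

variable [Algebra R A] (φ : A →ₗ[R] R)

def leftSlice : A ⊗[R] A →ₗ[R] A := (TensorProduct.lid R A).toLinearMap ∘ₗ φ.rTensor A

@[simp]
lemma leftSlice_tmul (x y : A) : leftSlice φ (x ⊗ₜ y) = φ x • y := rfl

lemma leftSlice_mul_one_tmul (t : A ⊗[R] A) (y : A) :
    leftSlice φ (t * (1 ⊗ₜ y)) = leftSlice φ t * y := by
  induction t with
  | zero => simp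
  | tmul u v => simp
  | add t t' ht ht' => simp [add_mul, ht, ht']

end Algebra

section Bialgebra

variable [Bialgebra R A] (ψ : A →ₗ[R] R)

def IsRightIntegral : Prop := ∀ a : A, leftSlice ψ (comul a) = ψ a • 1

/-- `x ↦ Σ ψ(b₁ x) b₂`. -/
def leftSliceComul (b : A) : A →ₗ[R] A :=
  leftSlice ψ ∘ₗ mulLeft R (comul b) ∘ₗ (TensorProduct.mk R A A).flip 1

lemma leftSliceComul_apply (b x : A) :
    leftSliceComul ψ b x = leftSlice ψ (comul b * (x ⊗ₜ 1)) := rfl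

lemma leftSliceComul_apply_eq_mul'_map (a b : A) :
    leftSliceComul ψ b a =
      mul' R A (map (Algebra.linearMap R A ∘ₗ ψ ∘ₗ mulRight R a) id (comul b)) := by
  rw [leftSliceComul_apply]
  induction comul (R := R) b with
  | zero => simp
  | tmul u v => simp [Algebra.smul_def]
  | add t t' ht ht' => simp [add_mul, ht, ht']

lemma mul'_map_leftSliceComul_id (b : A) (t : A ⊗[R] A) :
    mul' R A (map (leftSliceComul ψ b) id t) = leftSlice ψ (comul b * t) := by
  induction t with
  | zero => simp
  | tmul u v =>
    rw [map_tmul, mul'_apply, id_apply, leftSliceComul_apply, ← leftSlice_mul_one_tmul, mul_assoc,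
      Algebra.TensorProduct.tmul_mul_tmul, mul_one, one_mul]
  | add t t' ht ht' => simp [mul_add, ht, ht']

variable {ψ}

lemma IsRightIntegral.leftSliceComul_convMul_id (hψ : IsRightIntegral ψ) (b : A) :
    toConv (leftSliceComul ψ b) * toConv LinearMap.id =
      toConv (Algebra.linearMap R A ∘ₗ ψ ∘ₗ mulLeft R b) := by
  ext x
  rw [convMul_apply, ofConv_toConv, ofConv_toConv, mul'_map_leftSliceComul_id,
    ← Bialgebra.comul_mul, hψ]
  simp [Algebra.algebraMap_eq_smul_one]

end Bialgebra

variable [HopfAlgebra R A] {ψ : A →ₗ[R] R}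

lemma IsRightIntegral.convMul_antipode (hψ : IsRightIntegral ψ) (b : A) :
    toConv (Algebra.linearMap R A ∘ₗ ψ ∘ₗ mulLeft R b) * toConv (antipode R) =
      toConv (leftSliceComul ψ b) := by
  rw [← IsRightIntegral.leftSliceComul_convMul_id hψ, mul_assoc, id_mul_antipode, mul_one]

end HopfAlgebra

open HopfAlgebra

/-- Strong right invariance for a right integral `ψ` on a Hopf algebra:
`Σ ψ(b a₍₁₎) S(a₍₂₎) = Σ ψ(b₍₁₎ a) b₍₂₎`. -/
theorem stmt_6 (k H : Type*) [CommRing k] [Ring H] [HopfAlgebra k H]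
    (ψ : H →ₗ[k] k)
    (hψ : ∀ a : H,
      (TensorProduct.lid k H) (ψ.rTensor H (Coalgebra.comul a)) = ψ a • (1 : H)) :
    ∀ a b : H,
      (LinearMap.mul' k H)
        ((TensorProduct.map ((Algebra.linearMap k H) ∘ₗ ψ ∘ₗ LinearMap.mulLeft k b)
            (HopfAlgebra.antipode (R := k)))
          (Coalgebra.comul a))
      = (LinearMap.mul' k H)
        ((TensorProduct.map ((Algebra.linearMap k H) ∘ₗ ψ ∘ₗ LinearMap.mulRight k a)
            LinearMap.id)
          (Coalgebra.comul b)) := by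
  intro a b
  calc _ = leftSliceComul ψ b a := congr($(IsRightIntegral.convMul_antipode hψ b) a)
    _ = _ := leftSliceComul_apply_eq_mul'_map ψ a b
end

section
/- Let H be a finite-dimensional Hopf algebra with a left integral φ on H such that the map H → H*, a ↦ a·φ (where (a·φ)(b) = φ(ba)) is bijective. Give H* the dual Hopf algebra structure. Then the functional ψ̂ : H* → k defined by ψ̂(a·φ) := ε(a) is a right integral on the dual Hopf algebra H*, i.e. (ψ̂ ⊗ id)(Δ_{H*}(ω)) = ψ̂(ω)·1_{H*} for all ω ∈ H*. -/
/-!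
Write `ω ∈ H*` as `ω = a·φ`. Under the identification `(H ⊗ H)* ≅ H* ⊗ H*`, the element
`(ψ̂ ⊗ id)(Δ ω)` of `H*` sends `b` to `ψ̂ (x ↦ ω(x b)) = ψ̂ ((b a)·φ) = ε(b a) = ε(a) ε(b)`,
so it equals `ψ̂(ω) ε` because the counit is multiplicative.
-/

open TensorProduct Module

namespace TensorProduct

variable {R M N : Type*} [CommSemiring R] [AddCommMonoid M] [AddCommMonoid N]
  [Module R M] [Module R N]

theorem dualDistrib_dualDistribEquiv_symm [Module.Finite R M] [Module.Finite R N]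
    [Module.Free R M] [Module.Free R N] (f : Dual R (M ⊗[R] N)) :
    dualDistrib R M N ((dualDistribEquiv R M N).symm f) = f :=
  (dualDistribEquiv R M N).apply_symm_apply f

theorem lid_rTensor_apply_eq_dualDistrib_comp (ψ : Dual R (Dual R M))
    (s : Dual R M ⊗[R] Dual R N) (n : N) :
    TensorProduct.lid R (Dual R N) (ψ.rTensor (Dual R N) s) n =
      ψ (dualDistrib R M N s ∘ₗ (mk R M N).flip n) := by
  induction s using TensorProduct.induction_on with
  | zero => simp
  | tmul f g =>
    have hslice : dualDistrib R M N (f ⊗ₜ g) ∘ₗ (mk R M N).flip n = g n • f := by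
      ext m
      simp [dualDistrib_apply, mul_comm]
    simp [hslice, mul_comm]
  | add s t hs ht => simp only [map_add, LinearMap.add_comp, LinearMap.add_apply, hs, ht]

end TensorProduct

theorem LinearMap.mul'_comp_mk_flip (R A : Type*) [CommSemiring R] [NonUnitalSemiring A]
    [Module R A] [SMulCommClass R A A] [IsScalarTower R A A] (b : A) :
    mul' R A ∘ₗ (TensorProduct.mk R A A).flip b = mulRight R b := by
  ext x
  simp

theorem stmt_9_general (k H : Type*) [Field k] [Ring H] [HopfAlgebra k H] [FiniteDimensional k H]
    (φ : H →ₗ[k] k)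
    (hbij : Function.Bijective fun a : H => φ ∘ₗ LinearMap.mulRight k a)
    (ψhat : Module.Dual k (Module.Dual k H))
    (hψhat : ∀ a : H, ψhat (φ ∘ₗ LinearMap.mulRight k a) = Coalgebra.counit (R := k) a) :
    ∀ ω : Module.Dual k H,
      (TensorProduct.lid k (Module.Dual k H))
        (ψhat.rTensor (Module.Dual k H)
          ((TensorProduct.dualDistribEquiv k H H).symm (ω ∘ₗ LinearMap.mul' k H)))
      = ψhat ω • (Coalgebra.counit (R := k) : H →ₗ[k] k) := by
  intro ω
  obtain ⟨a, rfl⟩ := hbij.2 ω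
  ext b
  rw [lid_rTensor_apply_eq_dualDistrib_comp, dualDistrib_dualDistribEquiv_symm,
    LinearMap.comp_assoc, LinearMap.mul'_comp_mk_flip, LinearMap.comp_assoc,
    ← LinearMap.mulRight_mul, hψhat, LinearMap.smul_apply, hψhat, Bialgebra.counit_mul,
    smul_eq_mul, mul_comm]

/-- For a finite-dimensional Hopf algebra `H` with a left integral `φ` such that
`a ↦ a·φ` is bijective, the functional `ψ̂` on the dual Hopf algebra `H*` defined by
`ψ̂(a·φ) = ε(a)` is a right integral on `H*`; here the comultiplication of `H*` is
dual to the multiplication of `H` and the unit of `H*` is `ε`. -/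
theorem stmt_9 (k H : Type*) [Field k] [Ring H] [HopfAlgebra k H] [FiniteDimensional k H]
    (φ : H →ₗ[k] k)
    (hint : ∀ a : H,
      (TensorProduct.rid k H) (LinearMap.lTensor H φ (Coalgebra.comul a)) = φ a • (1 : H))
    (hbij : Function.Bijective fun a : H => φ ∘ₗ LinearMap.mulRight k a)
    (ψhat : Module.Dual k (Module.Dual k H))
    (hψhat : ∀ a : H, ψhat (φ ∘ₗ LinearMap.mulRight k a) = Coalgebra.counit (R := k) a) :
    ∀ ω : Module.Dual k H,
      (TensorProduct.lid k (Module.Dual k H))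
        (ψhat.rTensor (Module.Dual k H)
          ((TensorProduct.dualDistribEquiv k H H).symm (ω ∘ₗ LinearMap.mul' k H)))
      = ψhat ω • (Coalgebra.counit (R := k) : H →ₗ[k] k) :=
  stmt_9_general k H φ hbij ψhat hψhat
end
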